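/- (Theorem 4.1(i)) Let α₁ ≤ ⋯ ≤ α_s be nondecreasing, γ ∈ [0,1), m(j) = ⌊γj⌋+1, and define S₂(γ,s,m) = m·α₁ + m·Σ (α_{s-m+k} - α_{s-m+k-1})/(k ∨ m(s-m+k)) over k with m-s+1 < k ≤ m and m ≥ m(s-m+k), and D₂(γ,s) = max_{1≤m≤s} S₂(γ,s,m). If every true-hypothesis p-value satisfies P(p̂ᵢ ≤ u) ≤ u for u ∈ (0,1), then the stepup procedure with critical values α·αᵢ/D₂(γ,s) satisfies P(FDP > γ) ≤ α for every joint distribution of the p-values. -/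

import Mathlib

open MeasureTheory Finset
open scoped Classical

/-- `orderStat p k` is the `k`-th smallest value (1-indexed) among `p 0, …, p (n-1)`. -/
noncomputable def orderStat {n : ℕ} (p : Fin n → ℝ) (k : ℕ) : ℝ :=
  if h : k - 1 < n then p (Tuple.sort p ⟨k - 1, h⟩) else 0

/-- The number of rejections of the stepup procedure with critical values
`c 1 ≤ … ≤ c n` (1-indexed): the largest `j` with `p_(j) ≤ c j` (0 if none). -/
noncomputable def numReject {n : ℕ} (c : ℕ → ℝ) (p : Fin n → ℝ) : ℕ :=
  ((Finset.Icc 1 n).filter (fun j => orderStat p j ≤ c j)).sup id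

/-- The indices rejected by the stepup procedure: those carrying the
`numReject c p` smallest p-values (via the sorting permutation). -/
noncomputable def rejectedSet {n : ℕ} (c : ℕ → ℝ) (p : Fin n → ℝ) : Finset (Fin n) :=
  (Finset.univ.filter (fun j : Fin n => (j : ℕ) + 1 ≤ numReject c p)).image (Tuple.sort p)

/-- The `k`-th smallest (1-indexed) of the p-values with indices in `I`. -/
noncomputable def trueOrderStat {n : ℕ} (I : Finset (Fin n)) (p : Fin n → ℝ) (k : ℕ) : ℝ :=
  orderStat (fun j : Fin I.card => p (I.orderIsoOfFin rfl j).1) k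

/-- The false discovery proportion of the stepup procedure: number of rejected
true hypotheses divided by the total number of rejections (0 if no rejections). -/
noncomputable def FDP {n : ℕ} (I : Finset (Fin n)) (c : ℕ → ℝ) (p : Fin n → ℝ) : ℝ :=
  if numReject c p = 0 then 0
  else ((rejectedSet c p ∩ I).card : ℝ) / (numReject c p : ℝ)

/-- `S₂(γ,s,m)`, written with the summation index `j = s - m + k ∈ (1, s]`:
`S₂ = m·α₁ + m·∑ (α_j - α_{j-1})/((j+m-s) ∨ m(j))` over `j` with `m ≥ m(j)`. -/
noncomputable def S2val (c : ℕ → ℝ) (γ : ℝ) (s m : ℕ) : ℝ :=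
  m * c 1 + m * ∑ j ∈ (Finset.Icc 2 s).filter (fun j : ℕ => Nat.floor (γ * (j : ℝ)) + 1 ≤ m),
    (c j - c (j - 1)) / ((max (j + m - s) (Nat.floor (γ * (j : ℝ)) + 1) : ℕ) : ℝ)

/-! If `FDP > γ` with `R` rejections, at least `k_R = max (R - (s - t)) m(R)` of the `t` true
p-values lie below the critical value `β_R`, and `R ≤ J`, the largest `j ≤ s` with `m(j) ≤ t`.
Let `N_r` count the true p-values below `β_r` (nondecreasing in `r`) and take the nonincreasing
weights `w_r = 1 / k_r` for `r ≤ J`, `w_{J+1} = 0`. Then on that event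
`1 ≤ w_R N_R ≤ ∑_{r ≤ J} (w_r - w_{r+1}) N_r`, so Markov's inequality and `E N_r ≤ t β_r` give
`P(FDP > γ) ≤ t ∑_{r ≤ J} (w_r - w_{r+1}) β_r`; summation by parts turns the right side into
`α S₂(γ,s,t) / D₂(γ,s) ≤ α` (up to `w_1 ≤ 1` in the first term). -/

open scoped ENNReal

lemma Finset.sup_id_mem_of_ne_zero {S : Finset ℕ} (h : S.sup id ≠ 0) : S.sup id ∈ S := by
  obtain ⟨j, hj, hsup⟩ :=
    S.exists_mem_eq_sup (nonempty_iff_ne_empty.mpr fun he => h (by simp [he])) id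
  rwa [hsup]

section StepUp

variable {n : ℕ} {c : ℕ → ℝ} {p : Fin n → ℝ}

lemma numReject_spec (h : numReject c p ≠ 0) :
    1 ≤ numReject c p ∧ orderStat p (numReject c p) ≤ c (numReject c p) := by
  have hR := mem_filter.mp (sup_id_mem_of_ne_zero h)
  exact ⟨(mem_Icc.mp hR.1).1, hR.2⟩

lemma numReject_le (c : ℕ → ℝ) (p : Fin n → ℝ) : numReject c p ≤ n :=
  Finset.sup_le fun _ hj => (mem_Icc.mp (mem_filter.mp hj).1).2

lemma card_rejectedSet (c : ℕ → ℝ) (p : Fin n → ℝ) : #(rejectedSet c p) = numReject c p := by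
  rw [rejectedSet, card_image_of_injective _ (Tuple.sort p).injective]
  simpa only [Nat.add_one_le_iff] using
    (Fin.card_filter_val_lt (n := n) (m := numReject c p)).trans (min_eq_right (numReject_le c p))

lemma le_of_mem_rejectedSet {i : Fin n} (hi : i ∈ rejectedSet c p) :
    p i ≤ c (numReject c p) := by
  obtain ⟨j, hj, rfl⟩ := mem_image.mp hi
  have hjR : (j : ℕ) + 1 ≤ numReject c p := (mem_filter.mp hj).2
  obtain ⟨-, hR⟩ := numReject_spec (c := c) (p := p) (by omega)
  have hRn := numReject_le c p
  have hlt : numReject c p - 1 < n := by omega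
  calc p (Tuple.sort p j) ≤ p (Tuple.sort p ⟨_, hlt⟩) :=
        Tuple.monotone_sort p (Fin.mk_le_mk.mpr (by omega) : j ≤ ⟨_, hlt⟩)
    _ = orderStat p (numReject c p) := by rw [orderStat, dif_pos hlt]
    _ ≤ c (numReject c p) := hR

/-- The paper's `m(j) = ⌊γ j⌋ + 1`, the least `v` with `v / j > γ`. -/
noncomputable def minFalseDisc (γ : ℝ) (j : ℕ) : ℕ := ⌊γ * j⌋₊ + 1

/-- Among `j` rejections with `FDP > γ`, out of `s` hypotheses of which `t` are true, at least
this many are false discoveries. -/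
noncomputable def falseDiscBound (γ : ℝ) (s t j : ℕ) : ℕ := max (j + t - s) (minFalseDisc γ j)

lemma exists_falseDiscBound_le_card_of_lt_FDP {γ : ℝ} (hγ : 0 ≤ γ) {I : Finset (Fin n)}
    (h : γ < FDP I c p) :
    ∃ r ∈ Icc 1 n, falseDiscBound γ n #I r ≤ #(I.filter fun i => p i ≤ c r) := by
  set R := numReject c p
  have hR0 : R ≠ 0 := fun h0 => by simp [FDP, R, h0] at h; linarith
  rw [FDP, if_neg hR0] at h
  set V := #(rejectedSet c p ∩ I)
  have hRpos : (0 : ℝ) < R := by positivity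
  have hmV : minFalseDisc γ R ≤ V := by
    have : γ * R < V := by rwa [lt_div_iff₀ hRpos] at h
    exact Nat.floor_lt (by positivity) |>.mpr this
  have htrue : R + #I - n ≤ V := by
    have hsplit : V + #(rejectedSet c p \ I) = R :=
      (card_inter_add_card_sdiff _ _).trans (card_rejectedSet c p)
    have hfalse : #(rejectedSet c p \ I) ≤ n - #I := by
      simpa [card_univ_sdiff] using card_le_card (sdiff_subset_sdiff (subset_univ _) le_rfl :
        rejectedSet c p \ I ⊆ univ \ I)
    have hI : #I ≤ n := by simpa using card_le_univ I
    omega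
  have hVle : V ≤ #(I.filter fun i => p i ≤ c R) := card_le_card fun i hi => by
    rw [mem_inter] at hi
    exact mem_filter.mpr ⟨hi.2, le_of_mem_rejectedSet hi.1⟩
  obtain ⟨hR1, -⟩ := numReject_spec hR0
  exact ⟨R, mem_Icc.mpr ⟨hR1, numReject_le c p⟩, (max_le htrue hmV).trans hVle⟩

end StepUp

lemma natCast_card_filter_le_eq_sum_indicator {Ω ι : Type*} {I : Finset ι} {p : ι → Ω → ℝ}
    {u : ℝ} (ω : Ω) :
    (#(I.filter fun i => p i ω ≤ u) : ℝ≥0∞) = ∑ i ∈ I, {ω | p i ω ≤ u}.indicator 1 ω := by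
  rw [natCast_card_filter]
  simp only [Set.indicator_apply, Set.mem_ofPred_eq, Pi.one_apply]

section Markov

variable {Ω : Type*} [MeasurableSpace Ω] {μ : Measure Ω}

lemma measure_le_le_ofReal_of_superuniform [IsProbabilityMeasure μ] {X : Ω → ℝ}
    (hX : ∀ u ∈ Set.Ioo (0 : ℝ) 1, μ {ω | X ω ≤ u} ≤ ENNReal.ofReal u) (u : ℝ) :
    μ {ω | X ω ≤ u} ≤ ENNReal.ofReal u := by
  rcases le_or_gt 1 u with hu1 | hu1
  · exact prob_le_one.trans (by simpa using ENNReal.ofReal_le_ofReal hu1)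
  rcases lt_or_ge 0 u with hu0 | hu0
  · exact hX u ⟨hu0, hu1⟩
  rw [ENNReal.ofReal_of_nonpos hu0]
  refine ge_of_tendsto ((ENNReal.continuous_ofReal.tendsto' 0 0 ENNReal.ofReal_zero).mono_left
    (nhdsWithin_le_nhds (s := Set.Ioi 0))) ?_
  filter_upwards [Ioo_mem_nhdsGT zero_lt_one] with v hv
  exact (measure_mono fun ω hω => le_trans hω (hu0.trans hv.1.le)).trans (hX v hv)

section CountBelow

variable {ι : Type*} {I : Finset ι} {p : ι → Ω → ℝ} {u : ℝ}

lemma measurable_card_filter_le (hmeas : ∀ i, Measurable (p i)) :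
    Measurable fun ω => (#(I.filter fun i => p i ω ≤ u) : ℝ≥0∞) := by
  simp_rw [natCast_card_filter_le_eq_sum_indicator]
  exact Finset.measurable_sum _ fun i _ =>
    measurable_one.indicator (measurableSet_le (hmeas i) measurable_const)

lemma lintegral_card_filter_le (hmeas : ∀ i, Measurable (p i))
    (hp : ∀ i ∈ I, μ {ω | p i ω ≤ u} ≤ ENNReal.ofReal u) :
    ∫⁻ ω, (#(I.filter fun i => p i ω ≤ u) : ℝ≥0∞) ∂μ ≤ #I * ENNReal.ofReal u := by
  have hset : ∀ i, MeasurableSet {ω | p i ω ≤ u} := fun i =>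
    measurableSet_le (hmeas i) measurable_const
  calc ∫⁻ ω, (#(I.filter fun i => p i ω ≤ u) : ℝ≥0∞) ∂μ = ∑ i ∈ I, μ {ω | p i ω ≤ u} := by
        simp_rw [natCast_card_filter_le_eq_sum_indicator]
        rw [lintegral_finsetSum _ fun i _ => measurable_one.indicator (hset i)]
        simp_rw [lintegral_indicator_one (hset _)]
    _ ≤ ∑ _i ∈ I, ENNReal.ofReal u := sum_le_sum hp
    _ = #I * ENNReal.ofReal u := by rw [sum_const, nsmul_eq_mul]

end CountBelow

lemma ofReal_mul_le_sum_sub_mul {κ : ℕ → ℝ} (hκ : Antitone κ) {J : ℕ} (hκJ : κ (J + 1) = 0)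
    {x : ℕ → ℝ≥0∞} (hx : MonotoneOn x (Set.Icc 1 J)) {r : ℕ} (hr : r ∈ Icc 1 J) :
    ENNReal.ofReal (κ r) * x r ≤ ∑ q ∈ Icc 1 J, ENNReal.ofReal (κ q - κ (q + 1)) * x q := by
  obtain ⟨hr1, hrJ⟩ := mem_Icc.mp hr
  have htel : ENNReal.ofReal (κ r) = ∑ q ∈ Icc r J, ENNReal.ofReal (κ q - κ (q + 1)) := by
    rw [← ENNReal.ofReal_sum_of_nonneg fun q _ => sub_nonneg.mpr (hκ q.le_succ)]
    have := Finset.sum_Icc_sub hrJ (fun q => -κ q)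
    simp only [sub_neg_eq_add, neg_add_eq_sub, hκJ, neg_zero, zero_add] at this
    rw [this]
  calc ENNReal.ofReal (κ r) * x r
      = ∑ q ∈ Icc r J, ENNReal.ofReal (κ q - κ (q + 1)) * x r := by rw [htel, sum_mul]
    _ ≤ ∑ q ∈ Icc r J, ENNReal.ofReal (κ q - κ (q + 1)) * x q := by
      gcongr with q hq
      obtain ⟨hrq, hqJ⟩ := mem_Icc.mp hq
      exact hx ⟨hr1, hrJ⟩ ⟨hr1.trans hrq, hqJ⟩ hrq
    _ ≤ _ := sum_le_sum_of_subset (Icc_subset_Icc_left hr1)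

lemma measure_le_sum_sub_mul_lintegral {X : ℕ → Ω → ℝ≥0∞} (hX : ∀ r, Measurable (X r))
    {J : ℕ} (hXmono : ∀ ω, MonotoneOn (X · ω) (Set.Icc 1 J)) {κ : ℕ → ℝ} (hκ : Antitone κ)
    (hκJ : κ (J + 1) = 0) {E : Set Ω}
    (hE : ∀ ω ∈ E, ∃ r ∈ Icc 1 J, 1 ≤ ENNReal.ofReal (κ r) * X r ω) :
    μ E ≤ ∑ r ∈ Icc 1 J, ENNReal.ofReal (κ r - κ (r + 1)) * ∫⁻ ω, X r ω ∂μ := by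
  set h := fun ω => ∑ r ∈ Icc 1 J, ENNReal.ofReal (κ r - κ (r + 1)) * X r ω
  have hh : Measurable h := Finset.measurable_sum _ fun r _ => (hX r).const_mul _
  calc μ E ≤ μ {ω | 1 ≤ h ω} := measure_mono fun ω hω => by
        obtain ⟨r, hr, h1⟩ := hE ω hω
        exact h1.trans (ofReal_mul_le_sum_sub_mul hκ hκJ (hXmono ω) hr)
    _ ≤ ∫⁻ ω, h ω ∂μ := by simpa using mul_meas_ge_le_lintegral₀ hh.aemeasurable 1
    _ = _ := by
      rw [lintegral_finsetSum _ fun r _ => (hX r).const_mul _]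
      simp_rw [lintegral_const_mul _ (hX _)]

theorem measure_le_ofReal_card_mul_sum_of_superuniform [IsProbabilityMeasure μ] {ι : Type*}
    {I : Finset ι} {p : ι → Ω → ℝ} (hmeas : ∀ i, Measurable (p i))
    (hp : ∀ i ∈ I, ∀ u ∈ Set.Ioo (0 : ℝ) 1, μ {ω | p i ω ≤ u} ≤ ENNReal.ofReal u)
    {J : ℕ} {β : ℕ → ℝ} (hβ : MonotoneOn β (Set.Icc 1 J)) (hβ0 : ∀ r ∈ Icc 1 J, 0 ≤ β r)
    {κ : ℕ → ℝ} (hκ : Antitone κ) (hκJ : κ (J + 1) = 0) {E : Set Ω}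
    (hE : ∀ ω ∈ E, ∃ r ∈ Icc 1 J,
      1 ≤ ENNReal.ofReal (κ r) * #(I.filter fun i => p i ω ≤ β r)) :
    μ E ≤ ENNReal.ofReal (#I * ∑ r ∈ Icc 1 J, (κ r - κ (r + 1)) * β r) := by
  have hXmono : ∀ ω, MonotoneOn (fun r => (#(I.filter fun i => p i ω ≤ β r) : ℝ≥0∞))
      (Set.Icc 1 J) := fun ω r hr q hq hrq => by
    refine Nat.cast_le.mpr (card_le_card fun i hi => ?_)
    rw [mem_filter] at hi ⊢
    exact ⟨hi.1, hi.2.trans (hβ hr hq hrq)⟩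
  have hκr : ∀ r, 0 ≤ κ r - κ (r + 1) := fun r => sub_nonneg.mpr (hκ r.le_succ)
  calc μ E ≤ ∑ r ∈ Icc 1 J, ENNReal.ofReal (κ r - κ (r + 1)) *
        ∫⁻ ω, (#(I.filter fun i => p i ω ≤ β r) : ℝ≥0∞) ∂μ :=
      measure_le_sum_sub_mul_lintegral (fun _ => measurable_card_filter_le hmeas) hXmono hκ hκJ hE
    _ ≤ ∑ r ∈ Icc 1 J, ENNReal.ofReal (κ r - κ (r + 1)) * (#I * ENNReal.ofReal (β r)) := by
      gcongr with r
      exact lintegral_card_filter_le hmeas fun i hi =>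
        measure_le_le_ofReal_of_superuniform (hp i hi) _
    _ = ENNReal.ofReal (∑ r ∈ Icc 1 J, (κ r - κ (r + 1)) * (#I * β r)) := by
      rw [ENNReal.ofReal_sum_of_nonneg fun r hr =>
        mul_nonneg (hκr r) (mul_nonneg (Nat.cast_nonneg _) (hβ0 r hr))]
      refine sum_congr rfl fun r _ => ?_
      rw [ENNReal.ofReal_mul (hκr r), ENNReal.ofReal_mul (Nat.cast_nonneg _),
        ENNReal.ofReal_natCast]
    _ = _ := by
      rw [mul_sum]
      exact congrArg _ (sum_congr rfl fun r _ => by ring)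

end Markov

section Weights

variable {γ : ℝ} {s t : ℕ}

noncomputable def lastLevel (γ : ℝ) (s t : ℕ) : ℕ :=
  ((Icc 1 s).filter fun j => minFalseDisc γ j ≤ t).sup id

noncomputable def levelWeight (γ : ℝ) (s t r : ℕ) : ℝ :=
  if r ≤ lastLevel γ s t then ((falseDiscBound γ s t r : ℕ) : ℝ)⁻¹ else 0

lemma minFalseDisc_mono (hγ : 0 ≤ γ) : Monotone (minFalseDisc γ) := fun _ _ hij =>
  Nat.add_le_add_right (Nat.floor_le_floor (mul_le_mul_of_nonneg_left (Nat.cast_le.mpr hij) hγ)) 1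

lemma falseDiscBound_mono (hγ : 0 ≤ γ) : Monotone (falseDiscBound γ s t) := fun _ _ hij =>
  max_le_max (by omega) (minFalseDisc_mono hγ hij)

lemma one_le_falseDiscBound (j : ℕ) : 1 ≤ falseDiscBound γ s t j :=
  le_max_of_le_right (Nat.le_add_left 1 _)

lemma lastLevel_le : lastLevel γ s t ≤ s :=
  Finset.sup_le fun _ hj => (mem_Icc.mp (mem_filter.mp hj).1).2

lemma le_lastLevel {j : ℕ} (hj : j ∈ Icc 1 s) (h : minFalseDisc γ j ≤ t) : j ≤ lastLevel γ s t :=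
  le_sup (f := id) (mem_filter.mpr ⟨hj, h⟩)

lemma minFalseDisc_le_of_le_lastLevel (hγ : 0 ≤ γ) {j : ℕ} (hj1 : 1 ≤ j)
    (hj : j ≤ lastLevel γ s t) : minFalseDisc γ j ≤ t :=
  (minFalseDisc_mono hγ hj).trans (mem_filter.mp (sup_id_mem_of_ne_zero
    (S := (Icc 1 s).filter fun j => minFalseDisc γ j ≤ t) (show lastLevel γ s t ≠ 0 by omega))).2

lemma levelWeight_of_le {r : ℕ} (hr : r ≤ lastLevel γ s t) :
    levelWeight γ s t r = ((falseDiscBound γ s t r : ℕ) : ℝ)⁻¹ := if_pos hr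

lemma levelWeight_lastLevel_succ : levelWeight γ s t (lastLevel γ s t + 1) = 0 := if_neg (by omega)

lemma levelWeight_antitone (hγ : 0 ≤ γ) : Antitone (levelWeight γ s t) := by
  intro i j hij
  unfold levelWeight
  split_ifs with hj hi
  · exact inv_anti₀ (by exact_mod_cast one_le_falseDiscBound i)
      (by exact_mod_cast falseDiscBound_mono hγ hij)
  · omega
  · positivity
  · exact le_rfl

lemma one_le_ofReal_levelWeight_mul {r N : ℕ} (hr : r ≤ lastLevel γ s t)
    (hN : falseDiscBound γ s t r ≤ N) : 1 ≤ ENNReal.ofReal (levelWeight γ s t r) * N := by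
  have hpos : (0 : ℝ) < falseDiscBound γ s t r := by exact_mod_cast one_le_falseDiscBound r
  rw [levelWeight_of_le hr, ← ENNReal.ofReal_natCast N, ← ENNReal.ofReal_mul (by positivity),
    ENNReal.one_le_ofReal, le_inv_mul_iff₀ hpos, mul_one]
  exact_mod_cast hN

lemma exists_le_lastLevel_of_lt_FDP (hγ : 0 ≤ γ) {I : Finset (Fin s)} {β : ℕ → ℝ}
    {q : Fin s → ℝ} (h : γ < FDP I β q) : ∃ r ∈ Icc 1 (lastLevel γ s #I),
      1 ≤ ENNReal.ofReal (levelWeight γ s #I r) * #(I.filter fun i => q i ≤ β r) := by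
  obtain ⟨r, hr, hbound⟩ := exists_falseDiscBound_le_card_of_lt_FDP hγ h
  have hrJ : r ≤ lastLevel γ s #I :=
    le_lastLevel hr ((le_max_right _ _).trans (hbound.trans (card_filter_le _ _)))
  exact ⟨r, mem_Icc.mpr ⟨(mem_Icc.mp hr).1, hrJ⟩, one_le_ofReal_levelWeight_mul hrJ hbound⟩

lemma filter_floor_add_one_le_eq_Icc (hγ : 0 ≤ γ) :
    (Icc 2 s).filter (fun j : ℕ => ⌊γ * j⌋₊ + 1 ≤ t) = Icc 2 (lastLevel γ s t) := by
  ext j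
  simp only [mem_filter, mem_Icc]
  constructor
  · rintro ⟨⟨h2, hjs⟩, hj⟩
    exact ⟨h2, le_lastLevel (mem_Icc.mpr ⟨by omega, hjs⟩) hj⟩
  · rintro ⟨h2, hjJ⟩
    exact ⟨⟨h2, hjJ.trans lastLevel_le⟩, minFalseDisc_le_of_le_lastLevel hγ (by omega) hjJ⟩

end Weights

section S2

variable {c : ℕ → ℝ} {γ : ℝ} {s : ℕ}

lemma S2val_nonneg (hc : MonotoneOn c (Set.Icc 1 s)) (hc0 : 0 ≤ c 1) (m : ℕ) :
    0 ≤ S2val c γ s m := by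
  refine add_nonneg (by positivity) (mul_nonneg (by positivity) (sum_nonneg fun j hj => ?_))
  obtain ⟨hj2, hjs⟩ := mem_Icc.mp (mem_filter.mp hj).1
  exact div_nonneg (sub_nonneg.mpr (hc ⟨by omega, by omega⟩ ⟨by omega, hjs⟩ (by omega)))
    (Nat.cast_nonneg _)

lemma S2val_le_sup' (hc : MonotoneOn c (Set.Icc 1 s)) (hc0 : 0 ≤ c 1) (hs : (Icc 1 s).Nonempty)
    {t : ℕ} (ht : t ≤ s) : S2val c γ s t ≤ (Icc 1 s).sup' hs (S2val c γ s) := by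
  rcases Nat.eq_zero_or_pos t with rfl | ht0
  · calc S2val c γ s 0 = 0 := by simp [S2val]
      _ ≤ S2val c γ s 1 := S2val_nonneg hc hc0 1
      _ ≤ _ := le_sup' _ (mem_Icc.mpr ⟨le_rfl, nonempty_Icc.mp hs⟩)
  · exact le_sup' _ (mem_Icc.mpr ⟨ht0, ht⟩)

lemma sup'_S2val_nonneg (hc : MonotoneOn c (Set.Icc 1 s)) (hc0 : 0 ≤ c 1)
    (hs : (Icc 1 s).Nonempty) : 0 ≤ (Icc 1 s).sup' hs (S2val c γ s) := calc
  0 = S2val c γ s 0 := by simp [S2val]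
  _ ≤ _ := S2val_le_sup' hc hc0 hs (Nat.zero_le s)

lemma sum_Icc_sub_mul_eq (κ c : ℕ → ℝ) {J : ℕ} (hJ : 1 ≤ J) :
    ∑ r ∈ Icc 1 J, (κ r - κ (r + 1)) * c r
      = κ 1 * c 1 - κ (J + 1) * c J + ∑ j ∈ Icc 2 J, κ j * (c j - c (j - 1)) := by
  induction J, hJ using Nat.le_induction with
  | base => norm_num; ring
  | succ n hn ih =>
    rw [sum_Icc_succ_top (by omega), ih, sum_Icc_succ_top (by omega), Nat.add_sub_cancel]
    ring

lemma card_mul_sum_levelWeight_le_S2val (hγ : 0 ≤ γ) (hc : MonotoneOn c (Set.Icc 1 s))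
    (hc0 : 0 ≤ c 1) (t : ℕ) :
    (t : ℝ) * ∑ r ∈ Icc 1 (lastLevel γ s t),
      (levelWeight γ s t r - levelWeight γ s t (r + 1)) * c r ≤ S2val c γ s t := by
  set J := lastLevel γ s t
  rcases Nat.eq_zero_or_pos J with hJ | hJ
  · simpa [hJ] using S2val_nonneg (γ := γ) hc hc0 t
  have hw1 : levelWeight γ s t 1 * c 1 ≤ c 1 := by
    rw [levelWeight_of_le hJ]
    exact mul_le_of_le_one_left hc0
      (inv_le_one_of_one_le₀ (by exact_mod_cast one_le_falseDiscBound 1))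
  have hterm : ∀ j ∈ Icc 2 J, levelWeight γ s t j * (c j - c (j - 1))
      = (c j - c (j - 1)) / ((max (j + t - s) (⌊γ * j⌋₊ + 1) : ℕ) : ℝ) := fun j hj => by
    rw [levelWeight_of_le (mem_Icc.mp hj).2, inv_mul_eq_div]
    rfl
  rw [sum_Icc_sub_mul_eq _ _ hJ, levelWeight_lastLevel_succ, zero_mul, sub_zero,
    sum_congr rfl hterm, S2val, filter_floor_add_one_le_eq_Icc hγ, mul_add]
  gcongr

lemma card_mul_sum_levelWeight_mul_div_le (hγ : 0 ≤ γ) (hc : MonotoneOn c (Set.Icc 1 s))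
    (hc0 : 0 ≤ c 1) {α : ℝ} (hα : 0 ≤ α) (hs : (Icc 1 s).Nonempty) {t : ℕ} (ht : t ≤ s) :
    (t : ℝ) * ∑ r ∈ Icc 1 (lastLevel γ s t), (levelWeight γ s t r - levelWeight γ s t (r + 1)) *
      (α * c r / (Icc 1 s).sup' hs (S2val c γ s)) ≤ α := by
  set D := (Icc 1 s).sup' hs (S2val c γ s)
  set w := levelWeight γ s t
  calc (t : ℝ) * ∑ r ∈ Icc 1 (lastLevel γ s t), (w r - w (r + 1)) * (α * c r / D)
      = α * ((t * ∑ r ∈ Icc 1 (lastLevel γ s t), (w r - w (r + 1)) * c r) / D) := by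
        simp only [mul_sum, sum_div]
        exact sum_congr rfl fun r _ => by ring
    _ ≤ α * 1 := mul_le_mul_of_nonneg_left (div_le_one_of_le₀
        ((card_mul_sum_levelWeight_le_S2val hγ hc hc0 t).trans (S2val_le_sup' hc hc0 hs ht))
        (sup'_S2val_nonneg hc hc0 hs)) hα
    _ = α := mul_one α

end S2

/-- Theorem 4.1(i): the stepup procedure with critical values `α·αᵢ/D₂(γ,s)`
satisfies `P(FDP > γ) ≤ α` for every joint distribution of the p-values. -/
theorem stmt14 {Ω : Type*} [MeasurableSpace Ω] (μ : Measure Ω) [IsProbabilityMeasure μ]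
    {s : ℕ} (hs : 1 ≤ s)
    (c : ℕ → ℝ) (hc : ∀ i j, 1 ≤ i → i ≤ j → j ≤ s → c i ≤ c j) (hc0 : 0 ≤ c 1)
    (γ : ℝ) (hγ : γ ∈ Set.Ico (0 : ℝ) 1) (α : ℝ) (hα : α ∈ Set.Ioo (0 : ℝ) 1)
    (p : Fin s → Ω → ℝ) (hmeas : ∀ i, Measurable (p i))
    (I : Finset (Fin s))
    (hp : ∀ i ∈ I, ∀ u ∈ Set.Ioo (0 : ℝ) 1, μ {ω | p i ω ≤ u} ≤ ENNReal.ofReal u) :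
    (μ {ω | γ < FDP I
        (fun i => α * c i / ((Finset.Icc 1 s).sup' (Finset.nonempty_Icc.mpr hs) (S2val c γ s)))
        (fun i => p i ω)}).toReal ≤ α := by
  set D := (Icc 1 s).sup' (nonempty_Icc.mpr hs) (S2val c γ s)
  have hcmono : MonotoneOn c (Set.Icc 1 s) := fun i hi j hj hij => hc i j hi.1 hij hj.2
  have hD : 0 ≤ D := sup'_S2val_nonneg hcmono hc0 _
  have hJs : Set.Icc 1 (lastLevel γ s #I) ⊆ Set.Icc 1 s := Set.Icc_subset_Icc_right lastLevel_le
  have hβ : MonotoneOn (fun i => α * c i / D) (Set.Icc 1 s) := fun i hi j hj hij =>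
    div_le_div_of_nonneg_right (mul_le_mul_of_nonneg_left (hcmono hi hj hij) hα.1.le) hD
  have hβ0 : ∀ r ∈ Icc 1 (lastLevel γ s #I), 0 ≤ α * c r / D := fun r hr =>
    div_nonneg (mul_nonneg hα.1.le (hc0.trans (hcmono ⟨le_rfl, hs⟩ (hJs (mem_Icc.mp hr))
      (mem_Icc.mp hr).1))) hD
  have hbound := measure_le_ofReal_card_mul_sum_of_superuniform hmeas hp (hβ.mono hJs) hβ0
    (levelWeight_antitone hγ.1) levelWeight_lastLevel_succ
    fun ω hω => exists_le_lastLevel_of_lt_FDP hγ.1 hω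
  have hIs : #I ≤ s := by simpa using card_le_univ I
  exact ENNReal.toReal_le_of_le_ofReal hα.1.le (hbound.trans (ENNReal.ofReal_le_ofReal
    (card_mul_sum_levelWeight_mul_div_le hγ.1 hcmono hc0 hα.1.le _ hIs)))
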